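/- arXiv:2601.14920 — 4 statements merged into one kernel-verified Lean document; each statement's English description precedes it below -/
import Mathlib

section
/- Let k be a perfect field of characteristic p > 0 and let K = Frac(k[[t_1,...,t_n]]). Then K is a vector space of dimension p^n over the subfield K^{<p>} = F(K), where F is the field homomorphism extending the Frobenius of k by F(t_i) = t_i^p; a basis is given by the monomials t_1^{r_1}...t_n^{r_n} with 0 ≤ r_i ≤ p-1. -/
/-!
Sorting the exponents of a power series by their residues modulo `p` writes every
`h ∈ k[[t₁,…,tₙ]]` uniquely as `h = ∑_r c_r^p t^r` over `0 ≤ rᵢ < p`: the coefficient of `c_r`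
at `q` is the `p`-th root of the coefficient of `h` at `p • q + r`, which exists because `k` is
perfect. Hence `k[[t]]` is free with the basis `t^r` over its subring of `p`-th powers. Since `F`
agrees with `x ↦ x^p` on `k[[t]]`, it is the Frobenius of `K`, and clearing denominators
(`g / f = g f^{p-1} / f^p`) carries the freeness over to `K` over `K^p`.
-/

open scoped Classical

/-- The Frobenius on multivariate power series: `Σ a_i t^i ↦ Σ a_i^p t^{p·i}`. -/
noncomputable def frobMv {n : ℕ} {k : Type*} [CommSemiring k] (p : ℕ)
    (g : MvPowerSeries (Fin n) k) : MvPowerSeries (Fin n) k :=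
  fun i => if ∀ j, p ∣ i j then
    (MvPowerSeries.coeff (Finsupp.mapRange (· / p) (Nat.zero_div p) i) g) ^ p else 0

open MvPowerSeries

theorem frobMv_eq_pow {n p : ℕ} {k : Type*} [CommRing k] [ExpChar k p]
    (g : MvPowerSeries (Fin n) k) : frobMv p g = g ^ p := by
  have hp := expChar_pos k p
  rw [← map_frobenius_expand p hp.ne']
  ext m
  rw [coeff_map, frobenius_def]
  by_cases hm : ∀ j, p ∣ m j
  · have hq : p • m.mapRange (· / p) (Nat.zero_div p) = m := by
      ext i; simp [Nat.mul_div_cancel' (hm i)]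
    conv_rhs => rw [← hq, coeff_expand_smul]
    exact if_pos hm
  · push Not at hm
    obtain ⟨i, hi⟩ := hm
    rw [coeff_expand_of_not_dvd p _ g hi, zero_pow hp.ne']
    exact if_neg fun h => hi (h i)

noncomputable def finsuppOfFin {σ : Type*} [Finite σ] {p : ℕ} (r : σ → Fin p) : σ →₀ ℕ :=
  Finsupp.equivFunOnFinite.symm fun i => r i

@[simp] lemma finsuppOfFin_apply {σ : Type*} [Finite σ] {p : ℕ} (r : σ → Fin p) (i : σ) :
    finsuppOfFin r i = r i := rfl

theorem bijective_nsmul_add_finsuppOfFin {σ : Type*} [Finite σ] {p : ℕ} (hp : 0 < p) :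
    Function.Bijective fun x : (σ →₀ ℕ) × (σ → Fin p) => p • x.1 + finsuppOfFin x.2 := by
  constructor
  · rintro ⟨q, r⟩ ⟨q', r'⟩ h
    have hi : ∀ i, p * q i + r i = p * q' i + r' i := fun i => by
      simpa using DFunLike.congr_fun h i
    simp only [Prod.mk.injEq]
    constructor
    · ext i
      simpa [Nat.mul_add_div hp, Nat.div_eq_of_lt (r i).2, Nat.div_eq_of_lt (r' i).2] using
        congrArg (· / p) (hi i)
    · ext i
      simpa [Nat.mul_add_mod, Nat.mod_eq_of_lt (r i).2, Nat.mod_eq_of_lt (r' i).2] using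
        congrArg (· % p) (hi i)
  · intro m
    refine ⟨(m.mapRange (· / p) (Nat.zero_div p), fun i => ⟨m i % p, Nat.mod_lt _ hp⟩), ?_⟩
    ext i
    simp [Nat.div_add_mod]

namespace MvPowerSeries

theorem prod_X_pow_eq_monomial_finsuppOfFin {σ k : Type*} [Fintype σ] [CommSemiring k] {p : ℕ}
    (r : σ → Fin p) :
    ∏ i, (X i : MvPowerSeries σ k) ^ (r i : ℕ) = monomial (finsuppOfFin r) 1 := by
  rw [monomial_eq', map_one, one_mul, Finsupp.prod_fintype _ _ (fun _ => pow_zero _)]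
  rfl

variable {σ k : Type*} [Fintype σ] [CommRing k] {p : ℕ} [ExpChar k p]

theorem coeff_pow_mul_monomial_finsuppOfFin (g : MvPowerSeries σ k) (q : σ →₀ ℕ)
    (r r' : σ → Fin p) :
    coeff (p • q + finsuppOfFin r') (g ^ p * monomial (finsuppOfFin r) 1) =
      if r' = r then coeff q g ^ p else 0 := by
  have hp := expChar_pos k p
  rw [← map_frobenius_expand p hp.ne', coeff_mul_monomial, mul_one]
  split_ifs with hle hr hr
  · subst hr
    rw [add_tsub_cancel_right, coeff_map, coeff_expand_smul, frobenius_def]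
  · -- `expand` is supported on `p • _`, and `p • q + r'` has no second decomposition.
    suffices coeff (p • q + finsuppOfFin r' - finsuppOfFin r) (expand p hp.ne' g) = 0 by
      rw [coeff_map, this, map_zero]
    by_contra hne
    obtain ⟨q', -, hq'⟩ := support_expand_subset p hp.ne' g hne
    have hsum : p • q' + finsuppOfFin r = p • q + finsuppOfFin r' := by
      rw [show p • q' = _ from hq', tsub_add_cancel_of_le hle]
    have hinj := (bijective_nsmul_add_finsuppOfFin (σ := σ) hp).1
    exact hr (congrArg Prod.snd (@hinj (q', r) (q, r') hsum)).symm
  · exact absurd (hr ▸ le_add_self) hle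
  · rfl

variable [DecidableEq σ] [PerfectRing k p]

variable (p) in
noncomputable def frobeniusComponent (r : σ → Fin p) (h : MvPowerSeries σ k) :
    MvPowerSeries σ k :=
  fun q => (frobeniusEquiv k p).symm (coeff (p • q + finsuppOfFin r) h)

theorem sum_frobeniusComponent_pow_mul_monomial (h : MvPowerSeries σ k) :
    ∑ r, frobeniusComponent p r h ^ p * monomial (finsuppOfFin r) 1 = h := by
  ext m
  obtain ⟨⟨q, r'⟩, rfl⟩ := (bijective_nsmul_add_finsuppOfFin (σ := σ) (expChar_pos k p)).2 m
  simp only [map_sum, coeff_pow_mul_monomial_finsuppOfFin, Finset.sum_ite_eq, Finset.mem_univ,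
    if_true]
  exact frobeniusEquiv_symm_pow_p k p _

theorem eq_zero_of_sum_pow_mul_monomial_eq_zero {c : (σ → Fin p) → MvPowerSeries σ k}
    (hc : ∑ r, c r ^ p * monomial (finsuppOfFin r) 1 = 0) (r : σ → Fin p) : c r = 0 := by
  ext q
  have := congrArg (coeff (p • q + finsuppOfFin r)) hc
  simp only [map_sum, coeff_pow_mul_monomial_finsuppOfFin, Finset.sum_ite_eq, Finset.mem_univ,
    if_true, map_zero] at this
  rw [map_zero]
  exact (frobeniusEquiv k p).injective (by rwa [map_zero, frobeniusEquiv_apply, frobenius_def])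

end MvPowerSeries

namespace IsFractionRing

variable {A K ι : Type*} [CommRing A] [Field K] [Algebra A K] [IsFractionRing A K]
  {p : ℕ} [ExpChar K p] [Fintype ι] {b : ι → A}

theorem top_le_span_frobenius_fieldRange
    (hspan : ∀ h : A, ∃ c : ι → A, ∑ i, c i ^ p * b i = h) :
    ⊤ ≤ Submodule.span (frobenius K p).fieldRange (Set.range (algebraMap A K ∘ b)) := by
  have hA : ∀ h : A, algebraMap A K h ∈
      Submodule.span (frobenius K p).fieldRange (Set.range (algebraMap A K ∘ b)) := by
    intro h
    obtain ⟨c, rfl⟩ := hspan h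
    rw [map_sum]
    refine Submodule.sum_mem _ fun i _ => ?_
    convert Submodule.smul_mem _ (⟨frobenius K p (algebraMap A K (c i)), ⟨_, rfl⟩⟩ :
      (frobenius K p).fieldRange) (Submodule.subset_span (Set.mem_range_self i)) using 1
    simp [frobenius_def, Subfield.smul_def, smul_eq_mul]
  intro x _
  obtain ⟨g, f, hf, rfl⟩ := IsFractionRing.div_surjective (A := A) x
  have hf0 : algebraMap A K f ≠ 0 :=
    (IsLocalization.map_units K (⟨f, hf⟩ : nonZeroDivisors A)).ne_zero
  have hx : algebraMap A K g / algebraMap A K f =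
      (⟨frobenius K p (algebraMap A K f)⁻¹, ⟨_, rfl⟩⟩ : (frobenius K p).fieldRange) •
        algebraMap A K (g * f ^ (p - 1)) := by
    simp only [Subfield.smul_def, smul_eq_mul, frobenius_def, map_mul, map_pow, inv_pow]
    have hp := expChar_pos K p
    field_simp
    rw [mul_assoc, ← pow_succ', Nat.sub_add_cancel hp]
  rw [hx]
  exact Submodule.smul_mem _ _ (hA _)

theorem linearIndependent_frobenius_fieldRange
    (hind : ∀ c : ι → A, ∑ i, c i ^ p * b i = 0 → ∀ i, c i = 0) :
    LinearIndependent (frobenius K p).fieldRange (algebraMap A K ∘ b) := by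
  rw [Fintype.linearIndependent_iff]
  intro g hg i
  choose y hy using fun j => (g j).2
  obtain ⟨d, hd⟩ := IsLocalization.exist_integer_multiples (nonZeroDivisors A) Finset.univ y
  choose a ha using fun j => hd j (Finset.mem_univ j)
  have hd0 : algebraMap A K d ≠ 0 := (IsLocalization.map_units K d).ne_zero
  have hsum : algebraMap A K (∑ j, a j ^ p * b j) = 0 := by
    have : ∀ j, algebraMap A K (a j ^ p * b j) =
        algebraMap A K d ^ p * ((g j : K) * algebraMap A K (b j)) := by
      intro j
      rw [map_mul, map_pow, ha j, ← hy j, Algebra.smul_def, frobenius_def, mul_pow, mul_assoc]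
    simp only [map_sum, this, ← Finset.mul_sum, mul_eq_zero]
    exact Or.inr (by simpa [Subfield.smul_def, smul_eq_mul] using hg)
  have hy0 : y i = 0 := by
    have := ha i
    rw [hind a ((map_eq_zero_iff _ (IsFractionRing.injective A K)).1 hsum) i, map_zero,
      Algebra.smul_def, eq_comm, mul_eq_zero] at this
    exact this.resolve_left hd0
  exact Subtype.ext (by rw [← hy i, hy0, map_zero]; rfl)

end IsFractionRing

/-- for a perfect field `k` of characteristic `p > 0`, the fraction field
`K` of `k[[t_1,…,t_n]]` has dimension `p^n` over the image `K^{⟨p⟩}` of the Frobenius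
`F` (the field homomorphism extending the Frobenius of `k` by `F(t_i) = t_i^p`),
with basis the monomials `t_1^{r_1} ⋯ t_n^{r_n}`, `0 ≤ r_i ≤ p-1`. -/
theorem stmt0 (p n : ℕ) [Fact p.Prime] (k : Type*) [Field k] [CharP k p] [PerfectRing k p]
    (F : FractionRing (MvPowerSeries (Fin n) k) →+* FractionRing (MvPowerSeries (Fin n) k))
    (hF : ∀ g : MvPowerSeries (Fin n) k,
      F (algebraMap (MvPowerSeries (Fin n) k) (FractionRing (MvPowerSeries (Fin n) k)) g)
        = algebraMap (MvPowerSeries (Fin n) k) (FractionRing (MvPowerSeries (Fin n) k))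
            (frobMv p g)) :
    (∃ B : Module.Basis (Fin n → Fin p) F.fieldRange (FractionRing (MvPowerSeries (Fin n) k)),
      ∀ r : Fin n → Fin p,
        B r = ∏ i : Fin n,
          (algebraMap (MvPowerSeries (Fin n) k) (FractionRing (MvPowerSeries (Fin n) k))
            (MvPowerSeries.X i)) ^ ((r i : ℕ))) ∧
    Module.rank F.fieldRange (FractionRing (MvPowerSeries (Fin n) k)) = p ^ n := by
  set K := FractionRing (MvPowerSeries (Fin n) k)
  have : CharP K p := charP_of_injective_algebraMap' k p
  obtain rfl : F = frobenius K p :=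
    IsLocalization.ringHom_ext (nonZeroDivisors (MvPowerSeries (Fin n) k)) <|
      RingHom.ext fun g => by simp [hF, frobMv_eq_pow, frobenius_def, K]
  let b (r : Fin n → Fin p) : MvPowerSeries (Fin n) k := monomial (finsuppOfFin r) 1
  let B := Module.Basis.mk
    (IsFractionRing.linearIndependent_frobenius_fieldRange (K := K) (b := b)
      fun _ => eq_zero_of_sum_pow_mul_monomial_eq_zero)
    (IsFractionRing.top_le_span_frobenius_fieldRange (K := K) (b := b)
      fun h => ⟨_, sum_frobeniusComponent_pow_mul_monomial h⟩)
  refine ⟨⟨B, fun r => ?_⟩, ?_⟩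
  · simp only [B, b, Module.Basis.mk_apply, Function.comp_apply,
      ← prod_X_pow_eq_monomial_finsuppOfFin, map_prod, map_pow]
    rfl
  · rw [rank_eq_card_basis B]
    simp
end

section
/- Let k be a perfect field of characteristic p and let f ∈ k[[t_1,...,t_n]] be algebraic over k(t_1,...,t_n). Then the minimal polynomial E(t,y) ∈ k[t_1,...,t_n][y] of f over k(t) (normalized with globally coprime polynomial coefficients) is separable in y; in particular E is not of the form F(t, y^p) for any polynomial F, and f is a simple root of E(t,·). -/
/-!
A nonzero annihilator `E` of `f` of least degree is irreducible over `k(t)` (clearing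
denominators preserves the degree), so `E` is separable as soon as `∂E/∂y ≠ 0`; then `f` is also
a simple root, `∂E/∂y` having smaller degree. If `∂E/∂y = 0`, then `E = F(t, y^p)` with
`F(t, f^p) = 0`. As `k` is perfect, the Cartier operators
`Λₑ ψ = ∑ₘ (coeff_{pm+e} ψ)^{1/p} tᵐ` (for `0 ≤ eᵢ < p`) are additive on `k[[t]]` and satisfy
`Λₑ (ψ φ^p) = Λₑ(ψ) φ`. Applying to `0 = ∑ᵢ cᵢ (fⁱ)^p` some `Λₑ` that does not kill the
leading coefficient of `F` gives `G = ∑ᵢ Λₑ(cᵢ) yⁱ ≠ 0` with `G(t, f) = 0` and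
`deg G ≤ deg F < deg E`, contradicting minimality.
-/

theorem Nat.le_and_eq_of_add_mul_eq_mul_add {p u w m e : ℕ} (he : e < p)
    (h : u + p * w = p * m + e) : w ≤ m ∧ u = p * (m - w) + e := by
  have hw : w ≤ m := by
    by_contra! hlt
    nlinarith
  refine ⟨hw, ?_⟩
  obtain ⟨c, rfl⟩ := Nat.exists_eq_add_of_le hw
  rw [Nat.add_sub_cancel_left]
  nlinarith

theorem Finsupp.le_and_eq_of_add_nsmul_eq_nsmul_add {σ : Type*} {p : ℕ} {u w m e : σ →₀ ℕ}
    (he : ∀ i, e i < p) (h : u + p • w = p • m + e) : w ≤ m ∧ u = p • (m - w) + e := by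
  have key i :=
    Nat.le_and_eq_of_add_mul_eq_mul_add (he i) (by simpa using DFunLike.congr_fun h i)
  exact ⟨fun i => (key i).1, Finsupp.ext fun i => by simpa using (key i).2⟩

namespace MvPowerSeries

variable {σ k : Type*} [CommRing k] {p : ℕ} [ExpChar k p]

theorem coeff_pow_char_nsmul (φ : MvPowerSeries σ k) (m : σ →₀ ℕ) :
    coeff (p • m) (φ ^ p) = coeff m φ ^ p := by
  rw [← map_frobenius_expand p (expChar_ne_zero k p), coeff_map, coeff_expand_smul,
    frobenius_def]

theorem coeff_pow_char_of_not_dvd (φ : MvPowerSeries σ k) {m : σ →₀ ℕ} {i : σ} (h : ¬ p ∣ m i) :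
    coeff m (φ ^ p) = 0 := by
  rw [← map_frobenius_expand p (expChar_ne_zero k p), coeff_map,
    coeff_expand_of_not_dvd p _ _ h, map_zero]

variable (p) [PerfectRing k p]

noncomputable def cartier (e : σ →₀ ℕ) : MvPowerSeries σ k →+ MvPowerSeries σ k where
  toFun ψ m := (frobeniusEquiv k p).symm (coeff (p • m + e) ψ)
  map_zero' := by funext; exact map_zero _
  map_add' _ _ := by funext; exact map_add _ _ _

variable {p}

theorem coeff_cartier (e m : σ →₀ ℕ) (ψ : MvPowerSeries σ k) :
    coeff m (cartier p e ψ) = (frobeniusEquiv k p).symm (coeff (p • m + e) ψ) := rfl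

theorem cartier_mul_pow {e : σ →₀ ℕ} (he : ∀ i, e i < p) (ψ φ : MvPowerSeries σ k) :
    cartier p e (ψ * φ ^ p) = cartier p e ψ * φ := by
  classical
  have hp : p ≠ 0 := expChar_ne_zero k p
  ext m
  rw [coeff_cartier, RingEquiv.symm_apply_eq, coeff_mul, coeff_mul, map_sum]
  symm
  refine Finset.sum_of_injOn (fun x => (p • x.1 + e, p • x.2)) ?_ ?_ ?_ ?_
  · intro x _ y _ hxy
    simp only [Prod.mk.injEq, add_left_inj, nsmul_right_inj hp] at hxy
    exact Prod.ext hxy.1 hxy.2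
  · intro x hx
    simp only [Finset.mem_coe, Finset.HasAntidiagonal.mem_antidiagonal] at hx ⊢
    rw [← hx, smul_add]
    abel
  · rintro ⟨u, v⟩ huv hnot
    by_cases! hdvd : ∀ i, p ∣ v i
    · exfalso
      obtain ⟨w, rfl⟩ : ∃ w, v = p • w :=
        ⟨v.mapRange (· / p) (Nat.zero_div p), Finsupp.ext fun i => by
          simp [Nat.mul_div_cancel' (hdvd i)]⟩
      rw [Finset.HasAntidiagonal.mem_antidiagonal] at huv
      obtain ⟨hwm, rfl⟩ := Finsupp.le_and_eq_of_add_nsmul_eq_nsmul_add he huv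
      exact hnot ⟨(m - w, w), by simpa using tsub_add_cancel_of_le hwm, rfl⟩
    · obtain ⟨i, hi⟩ := hdvd
      rw [coeff_pow_char_of_not_dvd φ hi, mul_zero]
  · intro x _
    rw [map_mul, coeff_cartier, frobeniusEquiv_apply, frobenius_apply_frobeniusEquiv_symm,
      frobeniusEquiv_apply, frobenius_def, coeff_pow_char_nsmul]

end MvPowerSeries

namespace MvPolynomial

variable {σ k : Type*} [CommRing k] (p : ℕ) [ExpChar k p] [PerfectRing k p]

noncomputable def cartier (e : σ →₀ ℕ) (c : MvPolynomial σ k) : MvPolynomial σ k :=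
  .ofCoeff (((AddMonoidAlgebra.coeff c).comapDomain (p • · + e)
    ((add_left_injective e).comp (nsmul_right_injective (expChar_ne_zero k p))).injOn).mapRange
      (frobeniusEquiv k p).symm (map_zero _))

variable {p}

theorem coeff_cartier (e m : σ →₀ ℕ) (c : MvPolynomial σ k) :
    coeff m (cartier p e c) = (frobeniusEquiv k p).symm (coeff (p • m + e) c) := rfl

theorem coe_cartier (e : σ →₀ ℕ) (c : MvPolynomial σ k) :
    (cartier p e c : MvPowerSeries σ k) = MvPowerSeries.cartier p e c := by
  ext m
  rw [coeff_coe, coeff_cartier, MvPowerSeries.coeff_cartier, coeff_coe]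

end MvPolynomial

instance MvPowerSeries.instFaithfulSMulMvPolynomial {σ R : Type*} [CommSemiring R] :
    FaithfulSMul (MvPolynomial σ R) (MvPowerSeries σ R) :=
  (faithfulSMul_iff_algebraMap_injective _ _).mpr fun _ _ h =>
    MvPolynomial.coe_injective σ R (by simpa [MvPowerSeries.algebraMap_apply'] using h)

instance MvPowerSeries.instIsDomain {σ R : Type*} [CommRing R] [IsDomain R] :
    IsDomain (MvPowerSeries σ R) :=
  NoZeroDivisors.to_isDomain _

open Polynomial

theorem exists_aeval_eq_zero_of_aeval_pow_eq_zero {σ k : Type*} [CommRing k] {p : ℕ}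
    [ExpChar k p] [PerfectRing k p] {F : (MvPolynomial σ k)[X]} (hF : F ≠ 0)
    {f : MvPowerSeries σ k} (hFf : aeval (f ^ p) F = 0) :
    ∃ G : (MvPolynomial σ k)[X], G ≠ 0 ∧ G.natDegree ≤ F.natDegree ∧ aeval f G = 0 := by
  obtain ⟨d, hd⟩ := MvPolynomial.ne_zero_iff.mp (leadingCoeff_ne_zero.mpr hF)
  set e := d.mapRange (· % p) (Nat.zero_mod p)
  have he : ∀ i, e i < p := fun i => Nat.mod_lt _ (expChar_pos k p)
  set G :=
    ∑ i ∈ Finset.range (F.natDegree + 1), C (MvPolynomial.cartier p e (F.coeff i)) * X ^ i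
  have hGN : G.coeff F.natDegree = MvPolynomial.cartier p e F.leadingCoeff := by
    simp [G, finsetSum_coeff]
  refine ⟨G, fun hG0 => ?_, ?_, ?_⟩
  · have hd' : p • d.mapRange (· / p) (Nat.zero_div p) + e = d := by
      ext i; simp [e, Nat.div_add_mod]
    have hcoeff : MvPolynomial.coeff (d.mapRange (· / p) (Nat.zero_div p))
        (G.coeff F.natDegree) ≠ 0 := by
      rwa [hGN, MvPolynomial.coeff_cartier, hd', map_ne_zero_iff _ (RingEquiv.injective _)]
    rw [hG0, coeff_zero, MvPolynomial.coeff_zero] at hcoeff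
    exact hcoeff rfl
  · exact natDegree_sum_le_of_forall_le _ _ fun i hi =>
      (natDegree_C_mul_X_pow_le _ _).trans (Nat.lt_succ_iff.mp (Finset.mem_range.mp hi))
  · calc aeval f G
        = ∑ i ∈ Finset.range (F.natDegree + 1),
            MvPowerSeries.cartier p e ((F.coeff i : MvPowerSeries σ k) * (f ^ i) ^ p) := by
          simp [G, MvPowerSeries.cartier_mul_pow he, MvPolynomial.coe_cartier,
            MvPowerSeries.algebraMap_apply']
      _ = MvPowerSeries.cartier p e (aeval (f ^ p) F) := by
          rw [aeval_eq_sum_range, map_sum]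
          simp [Algebra.smul_def, MvPowerSeries.algebraMap_apply', ← pow_mul, mul_comm]
      _ = 0 := by rw [hFf, map_zero]

structure IsMinimalDegreeAnnihilator {R A : Type*} [CommRing R] [CommRing A] [Algebra R A]
    (x : A) (E : R[X]) : Prop where
  ne_zero : E ≠ 0
  aeval_eq_zero : aeval x E = 0
  natDegree_le : ∀ E' : R[X], E' ≠ 0 → aeval x E' = 0 → E.natDegree ≤ E'.natDegree

namespace IsMinimalDegreeAnnihilator

variable {R A : Type*} [CommRing R] [CommRing A] [Algebra R A] {x : A} {E : R[X]}

theorem natDegree_pos [FaithfulSMul R A] (hE : IsMinimalDegreeAnnihilator x E) :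
    0 < E.natDegree :=
  natDegree_pos_of_aeval_root hE.ne_zero hE.aeval_eq_zero fun _ =>
    (map_eq_zero_iff _ (FaithfulSMul.algebraMap_injective R A)).mp

theorem aeval_derivative_ne_zero [FaithfulSMul R A] (hE : IsMinimalDegreeAnnihilator x E)
    (hE' : derivative E ≠ 0) : aeval x (derivative E) ≠ 0 := fun h =>
  (hE.natDegree_le _ hE' h).not_gt (natDegree_derivative_lt hE.natDegree_pos.ne')

theorem irreducible_map_fractionRing [IsDomain R] [IsDomain A] [FaithfulSMul R A]
    (hE : IsMinimalDegreeAnnihilator x E) :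
    Irreducible (E.map (algebraMap R (FractionRing R))) := by
  let _ := FractionRing.liftAlgebra R (FractionRing A)
  set K := FractionRing R
  set y := algebraMap A (FractionRing A) x
  have hinj := FaithfulSMul.algebraMap_injective R K
  have hmap0 : E.map (algebraMap R K) ≠ 0 := (Polynomial.map_ne_zero_iff hinj).mpr hE.ne_zero
  have hEy : aeval y (E.map (algebraMap R K)) = 0 := by
    rw [aeval_map_algebraMap, aeval_algebraMap_apply, hE.aeval_eq_zero, map_zero]
  have hmin (q : K[X]) (hq : q ≠ 0) (hqy : aeval y q = 0) : E.natDegree ≤ q.natDegree := by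
    set P := IsLocalization.integerNormalization (nonZeroDivisors R) q
    have hP : P ≠ 0 := fun h => hq (IsFractionRing.integerNormalization_eq_zero_iff.mp h)
    have hPx : aeval x P = 0 := by
      apply FaithfulSMul.algebraMap_injective A (FractionRing A)
      rw [← aeval_algebraMap_apply, map_zero]
      exact IsLocalization.integerNormalization_aeval_eq_zero _ q hqy
    calc E.natDegree ≤ P.natDegree := hE.natDegree_le P hP hPx
      _ ≤ q.natDegree := le_natDegree_of_mem_supp _
          (IsLocalization.integerNormalization_support _ q (natDegree_mem_support_of_nonzero hP))
  rw [← irreducible_mul_leadingCoeff_inv, minpoly.unique K y (monic_mul_leadingCoeff_inv hmap0)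
    (by rw [map_mul, hEy, zero_mul]) fun q hq hqy => ?_]
  · exact minpoly.irreducible (IsAlgebraic.isIntegral ⟨_, hmap0, hEy⟩)
  · rw [degree_mul_leadingCoeff_inv _ hmap0, degree_eq_natDegree hmap0,
      degree_eq_natDegree hq.ne_zero, natDegree_map_eq_of_injective hinj]
    exact_mod_cast hmin q hq.ne_zero hqy

end IsMinimalDegreeAnnihilator

theorem IsMinimalDegreeAnnihilator.derivative_ne_zero {σ k : Type*} [CommRing k] [IsDomain k]
    {p : ℕ}
    [Fact p.Prime] [CharP k p] [PerfectRing k p] {f : MvPowerSeries σ k}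
    {E : (MvPolynomial σ k)[X]} (hE : IsMinimalDegreeAnnihilator f E) : derivative E ≠ 0 := by
  intro h
  have hexp := expand_contract p h (Fact.out : p.Prime).ne_zero
  set F := contract p E
  have hF : F ≠ 0 := fun h0 => hE.ne_zero (by rw [← hexp, h0, map_zero])
  have hFf : aeval (f ^ p) F = 0 := by rw [← expand_aeval, hexp, hE.aeval_eq_zero]
  obtain ⟨G, hG, hGF, hGf⟩ := exists_aeval_eq_zero_of_aeval_pow_eq_zero hF hFf
  have hdeg : E.natDegree = F.natDegree * p := by rw [← hexp, natDegree_expand]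
  have hFpos : 0 < F.natDegree := Nat.pos_of_mul_pos_right (hdeg ▸ hE.natDegree_pos)
  have hle : F.natDegree * p ≤ F.natDegree * 1 := by
    rw [mul_one, ← hdeg]
    exact (hE.natDegree_le G hG hGf).trans hGF
  exact (Fact.out : p.Prime).one_lt.not_ge (Nat.le_of_mul_le_mul_left hle hFpos)

/-- over a perfect field `k` of characteristic `p`, the minimal polynomial
`E(t,y) ∈ k[t₁,…,tₙ][y]` of an algebraic power series `f ∈ k[[t₁,…,tₙ]]` is separable
in `y`; in particular it is not of the form `F(t, y^p)` and `f` is a simple root of it. -/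
theorem stmt7 (p n : ℕ) [Fact p.Prime] (k : Type*) [Field k] [CharP k p] [PerfectRing k p]
    (f : MvPowerSeries (Fin n) k)
    (E : Polynomial (MvPolynomial (Fin n) k))
    (hE0 : E ≠ 0)
    (hEf : Polynomial.aeval f E = 0)
    (hmin : ∀ E' : Polynomial (MvPolynomial (Fin n) k),
      E' ≠ 0 → Polynomial.aeval f E' = 0 → E.natDegree ≤ E'.natDegree) :
    (E.map (algebraMap (MvPolynomial (Fin n) k)
        (FractionRing (MvPolynomial (Fin n) k)))).Separable ∧
    (¬ ∃ F : Polynomial (MvPolynomial (Fin n) k),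
        E = Polynomial.expand (MvPolynomial (Fin n) k) p F) ∧
    Polynomial.aeval f (Polynomial.derivative E) ≠ 0 := by
  have hE : IsMinimalDegreeAnnihilator f E := ⟨hE0, hEf, hmin⟩
  have hE' : derivative E ≠ 0 := hE.derivative_ne_zero
  refine ⟨?_, ?_, hE.aeval_derivative_ne_zero hE'⟩
  · rw [separable_iff_derivative_ne_zero hE.irreducible_map_fractionRing, derivative_map]
    exact (Polynomial.map_ne_zero_iff (IsFractionRing.injective _ _)).mpr hE'
  · rintro ⟨F, rfl⟩
    simp [derivative_expand] at hE'
end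

section
/- For nonzero multivariate polynomials A, B ∈ k[x_1,...,x_m] over a field k, the Newton polytope of the product satisfies NP(AB) = NP(A) + NP(B), where + denotes the Minkowski sum. -/
open scoped Pointwise

/-- The Newton polytope of a multivariate polynomial: the convex hull in `ℝ^m` of its
exponent vectors. -/
noncomputable def newtonPolytope {m : ℕ} {k : Type*} [CommSemiring k]
    (A : MvPolynomial (Fin m) k) : Set (Fin m → ℝ) :=
  convexHull ℝ ((fun d : Fin m →₀ ℕ => fun i => (d i : ℝ)) '' ↑A.support)

/-!
Every exponent of `AB` is a sum of exponents of `A` and `B`, so `NP(AB) ⊆ NP(A) + NP(B)`.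
Conversely `NP(A) + NP(B)` is the convex hull of the finitely many sums `a + b`, hence of its
extreme points. An extreme point `a + b` has only one such decomposition, since otherwise it would
be the midpoint of two other sums; so the coefficient of `x^(a+b)` in `AB` is the single product
of the nonzero coefficients of `x^a` in `A` and `x^b` in `B`, which is nonzero over a domain.
-/

section ExtremePoints

variable {𝕜 E : Type*} [Field 𝕜] [LinearOrder 𝕜] [IsStrictOrderedRing 𝕜]
  [AddCommGroup E] [Module 𝕜 E]

theorem eq_and_eq_of_add_mem_extremePoints {X : Set E} {s s' t t' : E}
    (hst' : s + t' ∈ X) (hs't : s' + t ∈ X) (hext : s + t ∈ X.extremePoints 𝕜)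
    (h : s' + t' = s + t) : s' = s ∧ t' = t := by
  have hsum : s + t' + (s' + t) = (2 : 𝕜) • (s + t) := by
    rw [two_smul]
    nth_rw 1 [← h]
    abel
  have hmid : s + t ∈ openSegment 𝕜 (s + t') (s' + t) :=
    ⟨1 / 2, 1 / 2, by norm_num, by norm_num, by norm_num,
      by rw [← smul_add, hsum, smul_smul]; norm_num⟩
  obtain ⟨h₁, h₂⟩ := (mem_extremePoints.1 hext).2 _ hst' _ hs't hmid
  exact ⟨add_right_cancel h₂, add_left_cancel h₁⟩

theorem uniqueAdd_of_map_add_mem_extremePoints {M : Type*} [AddCommMonoid M] [DecidableEq M]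
    {φ : M →+ E} (hφ : Function.Injective φ) {S T : Finset M} {a b : M}
    (ha : a ∈ S) (hb : b ∈ T)
    (hext : φ (a + b) ∈ (convexHull 𝕜 (φ '' ↑(S + T))).extremePoints 𝕜) :
    UniqueAdd S T a b := by
  intro a' b' ha' hb' hab
  have mem_hull : ∀ {x y}, x ∈ S → y ∈ T →
      φ x + φ y ∈ convexHull 𝕜 (φ '' ↑(S + T)) :=
    fun hx hy ↦ subset_convexHull 𝕜 _ ⟨_, Finset.add_mem_add hx hy, map_add φ _ _⟩
  rw [map_add] at hext
  obtain ⟨hφa, hφb⟩ := eq_and_eq_of_add_mem_extremePoints (mem_hull ha hb') (mem_hull ha' hb)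
    hext (by rw [← map_add, ← map_add, hab])
  exact ⟨hφ hφa, hφ hφb⟩

end ExtremePoints

theorem Set.Finite.convexHull_extremePoints_convexHull {E : Type*} [AddCommGroup E] [Module ℝ E]
    [TopologicalSpace E] [T2Space E] [IsTopologicalAddGroup E] [ContinuousSMul ℝ E]
    [LocallyConvexSpace ℝ E] {S : Set E} (hS : S.Finite) :
    convexHull ℝ ((convexHull ℝ S).extremePoints ℝ) = convexHull ℝ S := by
  have hext_finite := hS.subset (extremePoints_convexHull_subset (𝕜 := ℝ))
  calc convexHull ℝ ((convexHull ℝ S).extremePoints ℝ)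
      = closure (convexHull ℝ ((convexHull ℝ S).extremePoints ℝ)) :=
        (hext_finite.isCompact_convexHull ℝ).isClosed.closure_eq.symm
    _ = convexHull ℝ S :=
        closure_convexHull_extremePoints (hS.isCompact_convexHull ℝ) (convex_convexHull ℝ S)

theorem MvPolynomial.add_mem_support_mul_of_uniqueAdd {σ R : Type*} [CommSemiring R]
    [NoZeroDivisors R] {A B : MvPolynomial σ R} {a b : σ →₀ ℕ}
    (ha : a ∈ A.support) (hb : b ∈ B.support) (h : UniqueAdd A.support B.support a b) :
    a + b ∈ (A * B).support := by
  have hcoeff : coeff (a + b) (A * B) = coeff a A * coeff b B :=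
    AddMonoidAlgebra.coeff_mul_add_of_uniqueAdd h
  rw [mem_support_iff] at ha hb ⊢
  rw [hcoeff]
  exact mul_ne_zero ha hb

noncomputable def exponentVector (σ : Type*) : (σ →₀ ℕ) →+ (σ → ℝ) where
  toFun d i := d i
  map_zero' := by ext; simp
  map_add' a b := by ext; simp

theorem exponentVector_injective (σ : Type*) : Function.Injective (exponentVector σ) :=
  fun _ _ h ↦ Finsupp.ext fun i ↦ Nat.cast_injective (congrFun h i)

section NewtonPolytope

variable {m : ℕ} {k : Type*} [CommSemiring k]

theorem newtonPolytope_eq_convexHull_image (A : MvPolynomial (Fin m) k) :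
    newtonPolytope A = convexHull ℝ (exponentVector (Fin m) '' A.support) :=
  rfl

theorem newtonPolytope_add_newtonPolytope (A B : MvPolynomial (Fin m) k) :
    newtonPolytope A + newtonPolytope B =
      convexHull ℝ (exponentVector (Fin m) '' ↑(A.support + B.support)) := by
  rw [Finset.coe_add, Set.image_add, convexHull_add]
  rfl

theorem newtonPolytope_mul_subset (A B : MvPolynomial (Fin m) k) :
    newtonPolytope (A * B) ⊆ newtonPolytope A + newtonPolytope B := by
  classical
  rw [newtonPolytope_add_newtonPolytope, newtonPolytope_eq_convexHull_image]
  exact convexHull_mono (Set.image_mono (Finset.coe_subset.2 (MvPolynomial.support_mul A B)))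

theorem extremePoints_subset_newtonPolytope_mul [NoZeroDivisors k]
    (A B : MvPolynomial (Fin m) k) :
    (newtonPolytope A + newtonPolytope B).extremePoints ℝ ⊆ newtonPolytope (A * B) := by
  rw [newtonPolytope_add_newtonPolytope]
  intro v hv
  obtain ⟨_, hab, rfl⟩ := extremePoints_convexHull_subset hv
  obtain ⟨a, ha, b, hb, rfl⟩ := Finset.mem_add.1 hab
  have hunique := uniqueAdd_of_map_add_mem_extremePoints (exponentVector_injective _) ha hb hv
  exact subset_convexHull ℝ _
    ⟨a + b, MvPolynomial.add_mem_support_mul_of_uniqueAdd ha hb hunique, rfl⟩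

end NewtonPolytope

theorem stmt8_general (m : ℕ) (k : Type*) [Field k] (A B : MvPolynomial (Fin m) k) :
    newtonPolytope (A * B) = newtonPolytope A + newtonPolytope B := by
  refine (newtonPolytope_mul_subset A B).antisymm ?_
  have hfinite : (exponentVector (Fin m) '' ↑(A.support + B.support)).Finite :=
    (Finset.finite_toSet _).image _
  rw [newtonPolytope_add_newtonPolytope, ← hfinite.convexHull_extremePoints_convexHull,
    ← newtonPolytope_add_newtonPolytope]
  exact convexHull_min (extremePoints_subset_newtonPolytope_mul A B) (convex_convexHull ℝ _)

/-- for nonzero polynomials `A, B` over a field, `NP(AB) = NP(A) + NP(B)`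
(Minkowski sum). -/
theorem stmt8 (m : ℕ) (k : Type*) [Field k] (A B : MvPolynomial (Fin m) k)
    (hA : A ≠ 0) (hB : B ≠ 0) :
    newtonPolytope (A * B) = newtonPolytope A + newtonPolytope B :=
  stmt8_general m k A B
end

section
/- Let k be a field of characteristic p > 0 with perfect closure k_p, and let f ∈ k[[t_1,...,t_n]] be algebraic over k(t_1,...,t_n). Then the degree of the field extension k(t)(f) over k(t) equals the degree of k_p(t)(f) over k_p(t). -/
/-!
Extending scalars along `K → L` turns a nonzero polynomial over `K[t]` annihilating `f` into
one over `L[t]` of the same degree. Conversely, let `E ≠ 0` over `L[t]` annihilate `f`, and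
choose a `K`-linear functional `ℓ : L → K` not vanishing on some coefficient of `E`. Applying
`ℓ` coefficientwise commutes with multiplication by power series over `K`, so it carries the
relation `E(f) = 0` to `E'(f) = 0`, where `E'` is a nonzero polynomial over `K[t]` of no larger
degree. Hence the least degrees of annihilating polynomials over `K[t]` and over `L[t]` agree.
-/

open Polynomial

namespace MvPowerSeries

variable {σ K L : Type*} [CommSemiring K] [CommSemiring L] [Algebra K L]

def mapCoeffs (ℓ : L →ₗ[K] K) : MvPowerSeries σ L →ₗ[K] MvPowerSeries σ K :=
  ℓ.compLeft _

@[simp]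
lemma coeff_mapCoeffs (ℓ : L →ₗ[K] K) (g : MvPowerSeries σ L) (d : σ →₀ ℕ) :
    coeff d (mapCoeffs ℓ g) = ℓ (coeff d g) :=
  rfl

lemma mapCoeffs_mul_map (ℓ : L →ₗ[K] K) (g : MvPowerSeries σ L) (h : MvPowerSeries σ K) :
    mapCoeffs ℓ (g * map (algebraMap K L) h) = mapCoeffs ℓ g * h := by
  classical
  ext d
  simp only [coeff_mapCoeffs, coeff_mul, coeff_map, map_sum, mul_comm _ (algebraMap K L _),
    ← Algebra.smul_def, map_smul, smul_eq_mul]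
  exact Finset.sum_congr rfl fun _ _ => mul_comm _ _

end MvPowerSeries

namespace MvPolynomial

variable {σ R S : Type*} [CommSemiring R] [CommSemiring S]

noncomputable def mapCoeffs (g : R →+ S) : MvPolynomial σ R →+ MvPolynomial σ S where
  toFun := AddMonoidAlgebra.map g
  map_zero' := AddMonoidAlgebra.map_zero g
  map_add' := AddMonoidAlgebra.map_add g

@[simp]
lemma coeff_mapCoeffs (g : R →+ S) (q : MvPolynomial σ R) (d : σ →₀ ℕ) :
    coeff d (mapCoeffs g q) = g (coeff d q) :=
  rfl

lemma coe_mapCoeffs [Algebra S R] (ℓ : R →ₗ[S] S) (q : MvPolynomial σ R) :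
    (mapCoeffs ℓ.toAddMonoidHom q : MvPowerSeries σ S) = MvPowerSeries.mapCoeffs ℓ q := by
  ext d
  simp

lemma coe_map (φ : R →+* S) (q : MvPolynomial σ R) :
    (map φ q : MvPowerSeries σ S) = MvPowerSeries.map φ q := by
  ext d
  simp [coeff_map]

lemma algebraMap_mvPowerSeries_self (q : MvPolynomial σ R) :
    algebraMap (MvPolynomial σ R) (MvPowerSeries σ R) q = q := by
  rw [MvPowerSeries.algebraMap_apply', Algebra.algebraMap_self, MvPowerSeries.map_id,
    RingHom.id_apply]

end MvPolynomial

namespace Polynomial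

variable {R S : Type*} [Semiring R] [Semiring S]

noncomputable def mapCoeffs (g : R →+ S) (p : R[X]) : S[X] :=
  ofFinsupp (AddMonoidAlgebra.map g p.toFinsupp)

@[simp]
lemma coeff_mapCoeffs (g : R →+ S) (p : R[X]) (n : ℕ) :
    (p.mapCoeffs g).coeff n = g (p.coeff n) := by
  cases p
  rfl

lemma natDegree_mapCoeffs_le (g : R →+ S) (p : R[X]) :
    (p.mapCoeffs g).natDegree ≤ p.natDegree :=
  natDegree_le_iff_coeff_eq_zero.2 fun _ hn => by simp [coeff_eq_zero_of_natDegree_lt hn]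

end Polynomial

lemma Nat.sInf_eq_sInf_of_subset_of_forall_exists_le {s t : Set ℕ} (hst : s ⊆ t)
    (hts : ∀ m ∈ t, ∃ m' ∈ s, m' ≤ m) : sInf s = sInf t := by
  rcases t.eq_empty_or_nonempty with rfl | ht
  · rw [Set.subset_empty_iff.1 hst]
  obtain ⟨m, hm, hle⟩ := hts _ (Nat.sInf_mem ht)
  exact le_antisymm ((Nat.sInf_le hm).trans hle)
    (csInf_le_csInf (OrderBot.bddBelow t) ⟨m, hm⟩ hst)

namespace MvPowerSeries

variable {σ : Type*}

lemma aeval_mapCoeffs {K L : Type*} [CommSemiring K] [CommSemiring L] [Algebra K L]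
    (ℓ : L →ₗ[K] K) (f : MvPowerSeries σ K) (E : (MvPolynomial σ L)[X]) :
    Polynomial.aeval f (E.mapCoeffs (MvPolynomial.mapCoeffs ℓ.toAddMonoidHom))
      = mapCoeffs ℓ (Polynomial.aeval (map (algebraMap K L) f) E) := by
  have hdeg := (natDegree_mapCoeffs_le
    (MvPolynomial.mapCoeffs ℓ.toAddMonoidHom) E).trans_lt E.natDegree.lt_succ_self
  rw [aeval_eq_sum_range' hdeg, aeval_eq_sum_range' E.natDegree.lt_succ_self, map_sum]
  refine Finset.sum_congr rfl fun i _ => ?_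
  rw [Algebra.smul_def, Algebra.smul_def, MvPolynomial.algebraMap_mvPowerSeries_self,
    MvPolynomial.algebraMap_mvPowerSeries_self, ← map_pow, mapCoeffs_mul_map,
    Polynomial.coeff_mapCoeffs, MvPolynomial.coe_mapCoeffs]

lemma aeval_map_map {R S : Type*} [CommSemiring R] [CommSemiring S] (φ : R →+* S)
    (f : MvPowerSeries σ R) (E : (MvPolynomial σ R)[X]) :
    Polynomial.aeval (map φ f) (E.map (MvPolynomial.map φ)) = map φ (Polynomial.aeval f E) := by
  have hcomm : (map φ).comp (algebraMap (MvPolynomial σ R) (MvPowerSeries σ R))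
      = (algebraMap (MvPolynomial σ S) (MvPowerSeries σ S)).comp (MvPolynomial.map φ) :=
    RingHom.ext fun q => by
      simp only [RingHom.comp_apply, MvPolynomial.algebraMap_mvPowerSeries_self,
        MvPolynomial.coe_map]
  rw [aeval_def, aeval_def, eval₂_map, hom_eval₂, hcomm]

variable {K L : Type*} [Field K] [CommRing L] [Algebra K L]

lemma exists_aeval_eq_zero_natDegree_le_of_aeval_map_eq_zero (f : MvPowerSeries σ K)
    {E : (MvPolynomial σ L)[X]} (hE : E ≠ 0)
    (hf : Polynomial.aeval (map (algebraMap K L) f) E = 0) :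
    ∃ E' : (MvPolynomial σ K)[X],
      E' ≠ 0 ∧ Polynomial.aeval f E' = 0 ∧ E'.natDegree ≤ E.natDegree := by
  obtain ⟨d, hd⟩ := MvPolynomial.ne_zero_iff.1 (leadingCoeff_ne_zero.2 hE)
  obtain ⟨ℓ, hℓ⟩ := Module.Projective.exists_dual_ne_zero K hd
  refine ⟨E.mapCoeffs (MvPolynomial.mapCoeffs ℓ.toAddMonoidHom), fun h => hℓ ?_,
    by rw [aeval_mapCoeffs, hf, map_zero], natDegree_mapCoeffs_le _ _⟩
  simpa using congrArg (fun P => (P.coeff E.natDegree).coeff d) h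

/-- For a field `R`, the infimum is `[R(σ)(f) : R(σ)]` when `f` is algebraic (clear the
denominators of its minimal polynomial), and `0` otherwise. -/
def annihilatorDegrees {R : Type*} [CommSemiring R] (f : MvPowerSeries σ R) : Set ℕ :=
  {m | ∃ E : (MvPolynomial σ R)[X], E ≠ 0 ∧ Polynomial.aeval f E = 0 ∧ E.natDegree = m}

lemma annihilatorDegrees_subset_map [Nontrivial L] (f : MvPowerSeries σ K) :
    annihilatorDegrees f ⊆ annihilatorDegrees (map (algebraMap K L) f) := by
  rintro _ ⟨E, hE, hf, rfl⟩
  have hinj := MvPolynomial.map_injective (σ := σ) _ (algebraMap K L).injective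
  exact ⟨E.map (MvPolynomial.map (algebraMap K L)), (Polynomial.map_ne_zero_iff hinj).2 hE,
    by rw [aeval_map_map, hf, map_zero], natDegree_map_eq_of_injective hinj E⟩

theorem sInf_annihilatorDegrees_map [Nontrivial L] (f : MvPowerSeries σ K) :
    sInf (annihilatorDegrees f) = sInf (annihilatorDegrees (map (algebraMap K L) f)) :=
  Nat.sInf_eq_sInf_of_subset_of_forall_exists_le (annihilatorDegrees_subset_map f) <| by
    rintro _ ⟨E, hE, hf, rfl⟩
    obtain ⟨E', hE', hf', hle⟩ := exists_aeval_eq_zero_natDegree_le_of_aeval_map_eq_zero f hE hf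
    exact ⟨E'.natDegree, ⟨E', hE', hf', rfl⟩, hle⟩

end MvPowerSeries

theorem stmt10_general (p n : ℕ) [Fact p.Prime] (k : Type*) [Field k] [CharP k p]
    (f : MvPowerSeries (Fin n) k) :
    sInf {m : ℕ | ∃ E : Polynomial (MvPolynomial (Fin n) k),
        E ≠ 0 ∧ Polynomial.aeval f E = 0 ∧ E.natDegree = m}
    = sInf {m : ℕ | ∃ E : Polynomial (MvPolynomial (Fin n) (PerfectClosure k p)),
        E ≠ 0 ∧
        Polynomial.aeval (MvPowerSeries.map (PerfectClosure.of k p) f) E = 0 ∧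
        E.natDegree = m} := by
  let : Algebra k (PerfectClosure k p) := (PerfectClosure.of k p).toAlgebra
  exact MvPowerSeries.sInf_annihilatorDegrees_map f

/-- for `f ∈ k[[t₁,…,tₙ]]` algebraic over `k(t)`, the degree of `k(t)(f)`
over `k(t)` (expressed as the minimal `y`-degree of a nonzero polynomial annihilator
with coefficients in `k[t]`) equals the corresponding degree over the perfect closure
`k_p` of `k`. -/
theorem stmt10 (p n : ℕ) [Fact p.Prime] (k : Type*) [Field k] [CharP k p]
    (f : MvPowerSeries (Fin n) k)
    (halg : ∃ E : Polynomial (MvPolynomial (Fin n) k),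
      E ≠ 0 ∧ Polynomial.aeval f E = 0) :
    sInf {m : ℕ | ∃ E : Polynomial (MvPolynomial (Fin n) k),
        E ≠ 0 ∧ Polynomial.aeval f E = 0 ∧ E.natDegree = m}
    = sInf {m : ℕ | ∃ E : Polynomial (MvPolynomial (Fin n) (PerfectClosure k p)),
        E ≠ 0 ∧
        Polynomial.aeval (MvPowerSeries.map (PerfectClosure.of k p) f) E = 0 ∧
        E.natDegree = m} :=
  stmt10_general p n k f
end
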